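/- arXiv:math/0606059 — 3 statements merged into one kernel-verified Lean document; each statement's English description precedes it below -/
import Mathlib

section
/- Let L be an algebraically closed field of characteristic p > 0, let M be a finite-dimensional L-vector space, and let φ: M → M be an additive map that is semi-linear with respect to the Frobenius of L (i.e. φ(a·m) = a^p·φ(m) for a ∈ L, m ∈ M). Then the map φ - 1 : M → M is surjective. -/
/-!
Fix `y`. Since `M` is Noetherian, some iterate `φⁿ y` is a combination `∑_{i<n} bᵢ φⁱ y` of the
earlier ones, and we look for a preimage of the form `x = ∑_{i<n} aᵢ₊₁ φⁱ y`. Comparing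
coefficients, `φ x - x = y` follows from the recurrence `a₀ = -1`, `aᵢ₊₁ = aᵢᵖ + aₙᵖ bᵢ`
(note `(-1)ᵖ = -1`). Taking `aₙ = t` as unknown, each `aᵢ` is a polynomial `Qᵢ(t)` whose
derivative vanishes, so `Qₙ - X` is separable of positive degree and has a root `t` in `L`.
-/

open Polynomial Finset

theorem Submodule.exists_eq_sum_smul_of_isNoetherian {R M : Type*} [Semiring R] [AddCommMonoid M]
    [Module R M] [IsNoetherian R M] (v : ℕ → M) :
    ∃ n, ∃ b : ℕ → R, v n = ∑ i ∈ range n, b i • v i := by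
  let W : ℕ →o Submodule R M :=
    ⟨fun n => span R (v '' ↑(range n)), fun m n hmn =>
      span_mono (Set.image_mono (by simpa using hmn))⟩
  obtain ⟨n, hn⟩ := monotone_stabilizes_iff_noetherian.mpr inferInstance W
  have hmem : v n ∈ W n := by
    rw [hn (n + 1) n.le_succ]
    exact subset_span ⟨n, by simp, rfl⟩
  obtain ⟨b, hb⟩ := (mem_span_image_finset_iff_exists_fun' R).mp hmem
  exact ⟨n, b, hb.symm⟩

theorem IsSepClosed.exists_seq_succ_eq_pow_add_mul {L : Type*} [Field L] [IsSepClosed L]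
    (p : ℕ) [CharP L p] (b : ℕ → L) (n : ℕ) :
    ∃ a : ℕ → L, a 0 = -1 ∧ ∀ i, a (i + 1) = a i ^ p + a n ^ p * b i := by
  let Q : ℕ → L[X] := fun i => Nat.rec (-1) (fun i Qi => Qi ^ p + X ^ p * C (b i)) i
  have hQ_succ (i : ℕ) : Q (i + 1) = Q i ^ p + X ^ p * C (b i) := rfl
  have hQ' : ∀ i, derivative (Q i) = 0
    | 0 => by simp [Q]
    | i + 1 => by simp [hQ_succ, derivative_pow]
  have hderiv : derivative (Q n - X) = -1 := by simp [hQ']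
  have hdeg : (Q n - X).degree ≠ 0 := fun h => by
    simp [derivative_of_natDegree_zero (natDegree_eq_zero_iff_degree_le_zero.mpr h.le)] at hderiv
  have hsep : (Q n - X).Separable := by
    rw [Separable, hderiv]
    exact isCoprime_one_right.neg_right
  obtain ⟨t, ht⟩ := IsSepClosed.exists_root (Q n - X) hdeg hsep
  have htn : (Q n).eval t = t := sub_eq_zero.mp (by simpa using ht)
  refine ⟨fun i => (Q i).eval t, by simp [Q], fun i => ?_⟩
  simp only [hQ_succ, eval_add, eval_mul, eval_pow, eval_X, eval_C, htn]

theorem LinearMap.apply_sub_self_of_iterate_eq_sum {R M : Type*} [Ring R] [AddCommGroup M]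
    [Module R M] {σ : R →+* R} (f : M →ₛₗ[σ] M) (y : M) {n : ℕ} {a b : ℕ → R}
    (hn : f^[n] y = ∑ i ∈ Finset.range n, b i • f^[i] y) (ha0 : a 0 = -1)
    (ha : ∀ i, a (i + 1) = σ (a i) + σ (a n) * b i) :
    f (∑ i ∈ Finset.range n, a (i + 1) • f^[i] y) - ∑ i ∈ Finset.range n, a (i + 1) • f^[i] y
      = y := by
  set x := ∑ i ∈ Finset.range n, a (i + 1) • f^[i] y
  set S := ∑ i ∈ Finset.range (n + 1), σ (a i) • f^[i] y with hS
  have hx : x = S := by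
    simp only [x, S, ha, add_smul, mul_smul, sum_add_distrib, ← smul_sum, ← hn, sum_range_succ]
  have hfx : f x = S + y := by
    rw [hS, sum_range_succ', ha0]
    simp [x, map_sum, Function.iterate_succ_apply']
  rw [hfx, hx, add_sub_cancel_left]

/-- **Surjectivity of φ - 1 for a Frobenius-semilinear endomorphism.**
Let `L` be an algebraically closed field of characteristic `p > 0`, `M` a
finite-dimensional `L`-vector space and `φ : M → M` an additive map which is
semi-linear with respect to the Frobenius of `L` (i.e. `φ (a • m) = a ^ p • φ m`).
Then `φ - 1 : M → M` is surjective. -/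
theorem stmt_0 {L : Type*} [Field L] [IsAlgClosed L] (p : ℕ) [Fact p.Prime] [CharP L p]
    {M : Type*} [AddCommGroup M] [Module L M] [FiniteDimensional L M]
    (φ : M → M) (hadd : ∀ x y : M, φ (x + y) = φ x + φ y)
    (hsem : ∀ (a : L) (m : M), φ (a • m) = (a ^ p) • φ m) :
    Function.Surjective (fun m : M => φ m - m) := by
  intro y
  let φL : M →ₛₗ[frobenius L p] M := { toFun := φ, map_add' := hadd, map_smul' := hsem }
  obtain ⟨n, b, hn⟩ := Submodule.exists_eq_sum_smul_of_isNoetherian (R := L) (φ^[·] y)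
  obtain ⟨a, ha0, ha⟩ := IsSepClosed.exists_seq_succ_eq_pow_add_mul p b n
  exact ⟨_, φL.apply_sub_self_of_iterate_eq_sum y hn ha0 ha⟩
end

section
/- Let L be an algebraically closed field of characteristic p > 0, n ≥ 1, and let U = (a_{i,j}) be an invertible n×n matrix over L. Then for every b = (b₁,…,b_n) ∈ Lⁿ, the system of equations ∑_{j=1}^n a_{i,j}·x_j^p − x_i = b_i (for 1 ≤ i ≤ n) has a solution (x₁,…,x_n) ∈ Lⁿ. -/
/-!
For `h_j` of total degree `< e_j`, the polynomials `G_j = X_j ^ e_j - h_j` make `K[X]` a finite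
module over `K[G] = K[G_1, …, G_n]`: rewriting `X_j ^ e_j` as `G_j + h_j` lowers the degree, so
the monomials with exponents `< e_j` generate. Hence `K[X]` is algebraic over `K[G]`, and by
counting transcendence degrees the `G_j` are algebraically independent, so `K[G]` is a polynomial
ring. Going up along the integral extension `K[G] ⊆ K[X]` lifts the maximal ideal `(G_j - d_j)` to
a maximal ideal of `K[X]`, which by the Nullstellensatz is the ideal of a point `x` with
`G(x) = d`. The theorem is the case `e_j = p`, `h = U⁻¹ X`, `d = U⁻¹ b`.
-/

namespace MvPolynomial

variable {K σ : Type*} [Field K]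

noncomputable def powSub (e : σ → ℕ) (h : σ → MvPolynomial σ K) (j : σ) : MvPolynomial σ K :=
  X j ^ e j - h j

variable {e : σ → ℕ} {h : σ → MvPolynomial σ K}

theorem span_monomials_lt_eq_top (hh : ∀ j, (h j).totalDegree < e j) :
    Submodule.span (Algebra.adjoin K (Set.range (powSub e h)))
      ((fun β => monomial β (1 : K)) '' {β | ∀ j, β j < e j}) = ⊤ := by
  set M := Submodule.span (Algebra.adjoin K (Set.range (powSub e h)))
      ((fun β => monomial β (1 : K)) '' {β | ∀ j, β j < e j})
  suffices ∀ D, ∀ f : MvPolynomial σ K, f.totalDegree ≤ D → f ∈ M from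
    eq_top_iff.2 fun f _ => this _ f le_rfl
  intro D
  induction D using Nat.strong_induction_on with
  | _ D ih =>
  intro f hf
  rw [f.as_sum]
  refine Submodule.sum_mem _ fun μ hμ => ?_
  have hμD : μ.degree ≤ D := (le_totalDegree hμ).trans hf
  rw [← mul_one (coeff μ f), ← smul_eq_mul, ← smul_monomial]
  refine Submodule.smul_of_tower_mem _ _ ?_
  by_cases hbox : ∀ j, μ j < e j
  · exact Submodule.subset_span ⟨μ, hbox, rfl⟩
  push Not at hbox
  obtain ⟨j, hj⟩ := hbox
  obtain ⟨ν, rfl⟩ : ∃ ν, μ = ν + Finsupp.single j (e j) :=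
    ⟨μ - Finsupp.single j (e j), (tsub_add_cancel_of_le (Finsupp.single_le_iff.2 hj)).symm⟩
  have hdeg : (ν + Finsupp.single j (e j)).degree = ν.degree + e j := by
    rw [map_add, Finsupp.degree_single]
  have hmon : (monomial ν (1 : K)).totalDegree ≤ ν.degree := totalDegree_monomial_le ν 1
  have hν : monomial ν (1 : K) ∈ M :=
    ih _ (by have := (h j).totalDegree.zero_le.trans_lt (hh j); omega) _ hmon
  rw [monomial_add_single, ← sub_add_cancel (X j ^ e j) (h j), mul_add]
  refine M.add_mem ?_ (ih _ ?_ _ le_rfl)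
  · have hG : powSub e h j ∈ Algebra.adjoin K (Set.range (powSub e h)) :=
      Algebra.subset_adjoin ⟨j, rfl⟩
    simpa [powSub, Algebra.smul_def, mul_comm] using M.smul_mem ⟨_, hG⟩ hν
  · have := (totalDegree_mul (monomial ν (1 : K)) (h j)).trans (add_le_add hmon le_rfl)
    have := hh j
    omega

theorem finite_adjoin_powSub [Finite σ] (hh : ∀ j, (h j).totalDegree < e j) :
    Module.Finite (Algebra.adjoin K (Set.range (powSub e h))) (MvPolynomial σ K) := by
  classical
  refine .of_fg_top (Submodule.fg_def.2 ⟨_, ?_, span_monomials_lt_eq_top hh⟩)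
  refine Set.Finite.image _ ((Set.finite_Iic (Finsupp.equivFunOnFinite.symm e)).subset ?_)
  exact fun β hβ j => (hβ j).le

theorem algebraicIndependent_powSub [Finite σ] (hh : ∀ j, (h j).totalDegree < e j) :
    AlgebraicIndependent K (powSub e h) := by
  have := finite_adjoin_powSub hh
  refine (Algebra.IsAlgebraic.isTranscendenceBasis_of_lift_le_trdeg_of_finite K _ ?_).1
  simp

theorem exists_eval_powSub_eq [IsAlgClosed K] [Finite σ] (hh : ∀ j, (h j).totalDegree < e j)
    (d : σ → K) : ∃ x : σ → K, ∀ j, eval x (powSub e h j) = d j := by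
  set S := Algebra.adjoin K (Set.range (powSub e h))
  have := finite_adjoin_powSub hh
  have hind := algebraicIndependent_powSub hh
  let ψ : S →ₐ[K] K := (aeval d).comp hind.aevalEquiv.symm.toAlgHom
  have hψ : ∀ j, ψ ⟨powSub e h j, Algebra.subset_adjoin ⟨j, rfl⟩⟩ = d j := by
    intro j
    have : hind.aevalEquiv (X j) = ⟨powSub e h j, Algebra.subset_adjoin ⟨j, rfl⟩⟩ :=
      Subtype.ext (by simp)
    simp [ψ, ← this]
  have : (RingHom.ker ψ).IsMaximal :=
    RingHom.ker_isMaximal_of_surjective ψ fun c => ⟨algebraMap K S c, ψ.commutes c⟩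
  obtain ⟨Q, hQ, hQP⟩ := Ideal.exists_ideal_over_maximal_of_isIntegral (S := MvPolynomial σ K)
    (RingHom.ker ψ) (by simp)
  obtain ⟨x, rfl⟩ := isMaximal_iff_eq_vanishingIdeal_singleton.1 hQ
  refine ⟨x, fun j => ?_⟩
  have hmem : ⟨powSub e h j, Algebra.subset_adjoin ⟨j, rfl⟩⟩ - algebraMap K S (d j) ∈
      RingHom.ker ψ := by
    simp [hψ]
  rw [← hQP, Ideal.mem_comap, mem_vanishingIdeal_singleton_iff] at hmem
  simpa [sub_eq_zero] using hmem

end MvPolynomial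

open Matrix MvPolynomial

theorem stmt_2_general {L : Type*} [Field L] [IsAlgClosed L] (p : ℕ) [Fact p.Prime]
    (n : ℕ) (U : Matrix (Fin n) (Fin n) L) (hU : IsUnit U.det)
    (b : Fin n → L) :
    ∃ x : Fin n → L, ∀ i : Fin n, (∑ j : Fin n, U i j * x j ^ p) - x i = b i := by
  have hdeg (j : Fin n) : (∑ k, C (U⁻¹ j k) * X k : MvPolynomial (Fin n) L).totalDegree < p :=
    (totalDegree_finsetSum_le fun k _ => (totalDegree_mul _ _).trans (by simp)).trans_lt
      (Fact.out : p.Prime).one_lt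
  obtain ⟨x, hx⟩ := exists_eval_powSub_eq (e := fun _ => p) hdeg (U⁻¹ *ᵥ b)
  have hfix : (fun j => x j ^ p) - U⁻¹ *ᵥ x = U⁻¹ *ᵥ b :=
    funext fun j => by simpa [powSub, mulVec, dotProduct] using hx j
  have hsol : U *ᵥ (fun j => x j ^ p) - x = b := by
    simpa [mulVec_sub, mulVec_mulVec, mul_nonsing_inv _ hU]
      using congrArg (U *ᵥ ·) hfix
  exact ⟨x, fun i => by simpa [mulVec, dotProduct] using congrFun hsol i⟩

/-- **Solvability of the Artin–Schreier-type system attached to an invertible matrix.**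
Let `L` be an algebraically closed field of characteristic `p > 0`, `n ≥ 1` and
`U = (a_{i,j})` an invertible `n × n` matrix over `L`.  Then for every
`b = (b₁, …, b_n) ∈ Lⁿ` the system `∑_j a_{i,j} x_j ^ p − x_i = b_i` has a
solution in `Lⁿ`. -/
theorem stmt_2 {L : Type*} [Field L] [IsAlgClosed L] (p : ℕ) [Fact p.Prime] [CharP L p]
    (n : ℕ) (hn : 1 ≤ n) (U : Matrix (Fin n) (Fin n) L) (hU : IsUnit U.det)
    (b : Fin n → L) :
    ∃ x : Fin n → L, ∀ i : Fin n, (∑ j : Fin n, U i j * x j ^ p) - x i = b i :=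
  stmt_2_general p n U hU b
end

section
/- Let O be the ring of integers of an algebraically closed complete valued field of mixed characteristic (0,p), let 0 < r ≤ 1 be rational, let λ ∈ O with v_p(λ) ≤ 1 − 1/p and v_p(λ^{p−1}) ≥ r, and let R = O/m_r. Then for any R-algebra R', the map of sets x ↦ ∑_{i=1}^{p−1} (−λ)^{i−1} x^i / i from G^{(λ)}(R') to R' is a group homomorphism from the group law x*y = x+y+λxy to addition, i.e. ∑_{i=1}^{p−1} (−λ)^{i−1}(x*y)^i/i = ∑_{i=1}^{p−1}(−λ)^{i−1}x^i/i + ∑_{i=1}^{p−1}(−λ)^{i−1}y^i/i in R'. -/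
open scoped NNReal

set_option synthInstance.maxHeartbeats 1000000
set_option maxHeartbeats 1000000

/-- The ideal `m_a = {x ∈ O_{K̄} : v_p(x) ≥ a}` of the valuation ring
`O = v.integer`, written multiplicatively as `{x : v x ≤ (v p)^a}`. -/
noncomputable def mId {K : Type*} [Field K] (v : Valuation K ℝ≥0) (p : ℕ) (a : ℚ) :
    Ideal v.integer where
  carrier := {x : v.integer | v (x : K) ≤ v (p : K) ^ (a : ℝ)}
  add_mem' {x y} hx hy := le_trans (v.map_add _ _) (max_le hx hy)
  zero_mem' := by simp
  smul_mem' c x hx := by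
    have hc : v (c : K) ≤ 1 := c.2
    calc v ((c • x : v.integer) : K) = v (c : K) * v (x : K) := v.map_mul _ _
      _ ≤ 1 * (v (p : K) ^ (a : ℝ)) := mul_le_mul' hc hx
      _ = v (p : K) ^ (a : ℝ) := one_mul _

open Polynomial Finset

noncomputable def Dgen (R : Type*) [CommRing R] (c : ℕ → R) (n : ℕ) :
    Polynomial (MvPolynomial (Fin 2) R) :=
  ∑ i ∈ Finset.Icc 1 n,
    Polynomial.C (MvPolynomial.C (c i)) * (-Polynomial.X) ^ (i - 1) *
      ((Polynomial.C (MvPolynomial.X 0) + Polynomial.C (MvPolynomial.X 1) +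
          Polynomial.X * Polynomial.C (MvPolynomial.X 0) * Polynomial.C (MvPolynomial.X 1)) ^ i -
        Polynomial.C (MvPolynomial.X 0) ^ i - Polynomial.C (MvPolynomial.X 1) ^ i)

theorem myRCA (M : Type*) [AddGroup M] : IsRightCancelAdd M :=
  ⟨fun a b c h => by simpa using congrArg (fun z => z + (-b)) h⟩

noncomputable abbrev PP : Type := Polynomial (MvPolynomial (Fin 2) ℚ)
noncomputable abbrev QQ : Type := Polynomial PP

noncomputable local instance : IsRightCancelAdd PP := myRCA _
noncomputable local instance : IsRightCancelAdd QQ := myRCA QQ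
noncomputable local instance : HasDistribNeg PP :=
  @NonUnitalNonAssocRing.toHasDistribNeg PP (inferInstance)
noncomputable local instance : HasDistribNeg QQ :=
  @NonUnitalNonAssocRing.toHasDistribNeg QQ (inferInstance)

theorem dvd_Dq (n : ℕ) :
    (Polynomial.X : PP) ^ n ∣ Dgen ℚ (fun i => (i : ℚ)⁻¹) n := by
  classical
  set κ : ℚ →+* PP := (algebraMap ℚ PP : ℚ →+* PP) with hκ
  set xP : PP := Polynomial.C (MvPolynomial.X 0) with hxP
  set yP : PP := Polynomial.C (MvPolynomial.X 1) with hyP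
  set μ : QQ := Polynomial.C Polynomial.X with hμ
  set a : QQ := μ * Polynomial.C xP with ha
  set b : QQ := μ * Polynomial.C yP with hb
  set u : QQ := 1 + a * Polynomial.X with hu
  set w : QQ := 1 + b * Polynomial.X with hw
  set ℓ : QQ :=
    ∑ i ∈ Finset.Icc 1 n, Polynomial.C ((-1) ^ (i - 1) * κ (i : ℚ)⁻¹) *
      (Polynomial.X - 1) ^ i with hℓ
  set h : QQ := ℓ.comp u + ℓ.comp w - ℓ.comp (u * w) with hh
  -- Step 1: derivative of ℓ is a geometric sum
  have hdℓ : derivative ℓ = ∑ k ∈ Finset.range n, (1 - Polynomial.X) ^ k := by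
    rw [hℓ, map_sum]
    have e1 : ∀ i ∈ Finset.Icc 1 n,
        derivative (Polynomial.C ((-1) ^ (i - 1) * κ (i : ℚ)⁻¹) *
          (Polynomial.X - 1) ^ i) = (1 - Polynomial.X) ^ (i - 1) := by
      intro i hi
      obtain ⟨hi1, _⟩ := Finset.mem_Icc.mp hi
      rw [derivative_C_mul, derivative_pow]
      have e2 : derivative (Polynomial.X - 1 : QQ) = 1 := by simp
      rw [e2, mul_one]
      have hi0 : (i : ℚ) ≠ 0 := by exact_mod_cast Nat.one_le_iff_ne_zero.mp hi1
      rw [← mul_assoc, ← Polynomial.C_mul]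
      have e3 : (-1 : PP) ^ (i - 1) * κ (i : ℚ)⁻¹ * ((i : ℕ) : PP) = (-1) ^ (i - 1) := by
        rw [← map_natCast κ i, mul_assoc, ← map_mul, inv_mul_cancel₀ hi0, map_one, mul_one]
      rw [e3, map_pow, Polynomial.C_neg, Polynomial.C_1, ← neg_sub (Polynomial.X : QQ) 1]
      exact (neg_pow (Polynomial.X - 1 : QQ) (i - 1)).symm
    rw [Finset.sum_congr rfl e1, ← Finset.Ico_add_one_right_eq_Icc, Finset.sum_Ico_eq_sum_range]
    simp
  -- Step 2: X * ℓ' = 1 - (1-X)^n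
  have hXdℓ : Polynomial.X * derivative ℓ = 1 - (1 - Polynomial.X) ^ n := by
    rw [hdℓ]
    have := geom_sum_mul (1 - Polynomial.X : QQ) n
    linear_combination -this
  -- Step 3: composed version
  have hcomp : ∀ q : QQ, q * (derivative ℓ).comp q = 1 - (1 - q) ^ n := by
    intro q
    have := congrArg (fun z => Polynomial.comp z q) hXdℓ
    simpa [Polynomial.mul_comp, Polynomial.sub_comp, Polynomial.pow_comp,
      Polynomial.one_comp, Polynomial.X_comp] using this
  -- Step 4: derivative of h
  have hda : derivative a = 0 := by rw [ha, hμ, ← Polynomial.C_mul]; simp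
  have hdb : derivative b = 0 := by rw [hb, hμ, ← Polynomial.C_mul]; simp
  have hdu : derivative u = a := by
    rw [hu, derivative_add, derivative_one, derivative_mul, hda, derivative_X]; ring
  have hdw : derivative w = b := by
    rw [hw, derivative_add, derivative_one, derivative_mul, hdb, derivative_X]; ring
  have hdh : derivative h = a * (derivative ℓ).comp u + b * (derivative ℓ).comp w -
      (a * w + u * b) * (derivative ℓ).comp (u * w) := by
    rw [hh, derivative_sub, derivative_add, derivative_comp, derivative_comp, derivative_comp,
      derivative_mul, hdu, hdw]
  -- Step 5: key identity
  have key : (u * w) * derivative h =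
      -(a * w * (1 - u) ^ n) - (u * b) * (1 - w) ^ n + (a * w + u * b) * (1 - u * w) ^ n := by
    rw [hdh]
    linear_combination (w * a) * hcomp u + (u * b) * hcomp w - (a * w + u * b) * hcomp (u * w)
  -- Step 6: divisibility of (u*w) * h'
  have hdvd_a : μ ∣ a := ⟨Polynomial.C xP, ha⟩
  have hdvd_b : μ ∣ b := ⟨Polynomial.C yP, hb⟩
  have hdvd1u : μ ∣ (1 - u) := by
    have e : (1 : QQ) - u = -(a * Polynomial.X) := by rw [hu]; ring
    rw [e]
    exact dvd_neg.mpr (hdvd_a.mul_right _)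
  have hdvd1w : μ ∣ (1 - w) := by
    have e : (1 : QQ) - w = -(b * Polynomial.X) := by rw [hw]; ring
    rw [e]
    exact dvd_neg.mpr (hdvd_b.mul_right _)
  have hdvd1uw : μ ∣ (1 - u * w) := by
    have e : (1 : QQ) - u * w =
        -(a * Polynomial.X) - b * Polynomial.X - a * b * Polynomial.X ^ 2 := by
      rw [hu, hw]; ring
    rw [e]
    exact dvd_sub (dvd_sub (dvd_neg.mpr (hdvd_a.mul_right _)) (hdvd_b.mul_right _))
      ((hdvd_a.mul_right _).mul_right _)
  have keydvd : μ ^ (n + 1) ∣ (u * w) * derivative h := by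
    rw [key, pow_succ']
    refine dvd_add (dvd_sub (α := QQ) ?_ ?_) ?_
    · exact dvd_neg.mpr (mul_dvd_mul (α := QQ) (hdvd_a.mul_right w) (pow_dvd_pow_of_dvd (α := QQ) hdvd1u n))
    · exact mul_dvd_mul (α := QQ) (hdvd_b.mul_left u) (pow_dvd_pow_of_dvd (α := QQ) hdvd1w n)
    · exact mul_dvd_mul (α := QQ) (dvd_add (hdvd_a.mul_right w) (hdvd_b.mul_left u))
        (pow_dvd_pow_of_dvd (α := QQ) hdvd1uw n)
  set s : QQ := Polynomial.C xP * Polynomial.X + Polynomial.C yP * Polynomial.X +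
      μ * (Polynomial.C xP * Polynomial.C yP) * Polynomial.X ^ 2 with hs
  have huws : u * w = 1 + μ * s := by rw [hu, hw, ha, hb, hs]; ring
  have hstep : ∀ k, k ≤ n + 1 → μ ^ k ∣ derivative h := by
    intro k
    induction k with
    | zero => exact fun _ => by simpa using one_dvd _
    | succ m ih =>
      intro hm
      have h1 : μ ^ m ∣ derivative h := ih (Nat.le_of_succ_le hm)
      have h2 : derivative h = (u * w) * derivative h - μ * (s * derivative h) := by
        rw [huws]; ring
      rw [h2]
      refine dvd_sub (dvd_trans (pow_dvd_pow μ hm) keydvd) ?_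
      rw [pow_succ']
      exact mul_dvd_mul_left μ (h1.mul_left s)
  have hdvddh : μ ^ (n + 1) ∣ derivative h := hstep (n + 1) le_rfl
  -- Step 7: μ^{n+1} ∣ h
  have hCpow : μ ^ (n + 1) = Polynomial.C ((Polynomial.X : PP) ^ (n + 1)) := by
    rw [hμ, ← map_pow]
  rw [hCpow] at hdvddh
  have hcoeffd : ∀ j, (Polynomial.X : PP) ^ (n + 1) ∣ (derivative h).coeff j :=
    (Polynomial.C_dvd_iff_dvd_coeff _ _).mp hdvddh
  have hcoeffh : ∀ j, (Polynomial.X : PP) ^ (n + 1) ∣ h.coeff j := by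
    intro j
    cases j with
    | zero =>
      have hu0 : u.eval 0 = 1 := by rw [hu]; simp
      have hw0 : w.eval 0 = 1 := by rw [hw]; simp
      have hl1 : ℓ.eval 1 = 0 := by
        rw [hℓ, Polynomial.eval_finset_sum]
        apply Finset.sum_eq_zero
        intro i hi
        obtain ⟨hi1, _⟩ := Finset.mem_Icc.mp hi
        simp [Polynomial.eval_mul, Polynomial.eval_pow,
          zero_pow (Nat.one_le_iff_ne_zero.mp hi1)]
      have hev : h.coeff 0 = 0 := by
        rw [Polynomial.coeff_zero_eq_eval_zero, hh]
        simp [Polynomial.eval_comp, hu0, hw0, hl1]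
      rw [hev]
      exact dvd_zero _
    | succ m =>
      have hd := hcoeffd m
      rw [Polynomial.coeff_derivative] at hd
      have hunit : IsUnit ((m : PP) + 1) := by
        have e : ((m : PP) + 1) = κ ((m : ℚ) + 1) := by
          rw [map_add, map_natCast, map_one]
        rw [e]
        exact (isUnit_iff_ne_zero.mpr (Nat.cast_add_one_ne_zero m)).map κ
      exact (IsUnit.dvd_mul_right hunit).mp hd
  have hdvdh : Polynomial.C ((Polynomial.X : PP) ^ (n + 1)) ∣ h :=
    (Polynomial.C_dvd_iff_dvd_coeff _ _).mpr hcoeffh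
  -- Step 8: evaluate at T = 1
  have hdvdev : (Polynomial.X : PP) ^ (n + 1) ∣ h.eval 1 := by
    have := map_dvd (Polynomial.evalRingHom (1 : PP)) hdvdh
    simpa using this
  have hu1 : u.eval 1 = 1 + Polynomial.X * xP := by
    rw [hu, ha, hμ]; simp
  have hw1 : w.eval 1 = 1 + Polynomial.X * yP := by
    rw [hw, hb, hμ]; simp
  have hheval : h.eval 1 = ℓ.eval (1 + Polynomial.X * xP) + ℓ.eval (1 + Polynomial.X * yP) -
      ℓ.eval ((1 + Polynomial.X * xP) * (1 + Polynomial.X * yP)) := by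
    rw [hh]
    simp [Polynomial.eval_comp, hu1, hw1]
  have hleval : ∀ q : PP, ℓ.eval (1 + Polynomial.X * q) =
      ∑ i ∈ Finset.Icc 1 n, ((-1) ^ (i - 1) * κ (i : ℚ)⁻¹) * (Polynomial.X ^ i * q ^ i) := by
    intro q
    rw [hℓ, Polynomial.eval_finset_sum]
    apply Finset.sum_congr rfl
    intro i _
    rw [Polynomial.eval_mul, Polynomial.eval_C, Polynomial.eval_pow, Polynomial.eval_sub,
      Polynomial.eval_X, Polynomial.eval_one]
    have e : (1 : PP) + Polynomial.X * q - 1 = Polynomial.X * q := by ring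
    rw [e, mul_pow]
  -- Step 9: identify with Dgen
  have hzmul : (1 + Polynomial.X * xP) * (1 + Polynomial.X * yP) =
      1 + Polynomial.X * (xP + yP + Polynomial.X * xP * yP) := by ring
  have hκC : ∀ r : ℚ, κ r = Polynomial.C (MvPolynomial.C r) := by
    intro r
    rw [hκ, Polynomial.algebraMap_apply, MvPolynomial.algebraMap_eq]
  have hD : h.eval 1 = -(Polynomial.X * Dgen ℚ (fun i => (i : ℚ)⁻¹) n) := by
    rw [hheval, hzmul, hleval, hleval, hleval, Dgen, Finset.mul_sum]
    rw [← Finset.sum_add_distrib, ← Finset.sum_sub_distrib, ← Finset.sum_neg_distrib]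
    apply Finset.sum_congr rfl
    intro i hi
    obtain ⟨hi1, _⟩ := Finset.mem_Icc.mp hi
    obtain ⟨j, rfl⟩ : ∃ j, i = j + 1 := ⟨i - 1, (Nat.succ_pred_eq_of_pos hi1).symm⟩
    simp only [Nat.add_sub_cancel]
    rw [hκC, ← hxP, ← hyP]
    ring
  rw [hD] at hdvdev
  rw [dvd_neg, pow_succ'] at hdvdev
  exact (mul_dvd_mul_iff_left (Polynomial.X_ne_zero : (Polynomial.X : PP) ≠ 0)).mp hdvdev

theorem dvd_Dz (n : ℕ) :
    (Polynomial.X : Polynomial (MvPolynomial (Fin 2) ℤ)) ^ n ∣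
      Dgen ℤ (fun i => ((n.factorial / i : ℕ) : ℤ)) n := by
  classical
  have hq := dvd_Dq n
  set f : MvPolynomial (Fin 2) ℤ →+* MvPolynomial (Fin 2) ℚ :=
    MvPolynomial.map (Int.castRingHom ℚ) with hf
  have hmap : Polynomial.map f (Dgen ℤ (fun i => ((n.factorial / i : ℕ) : ℤ)) n) =
      Polynomial.C (MvPolynomial.C ((n.factorial : ℚ))) * Dgen ℚ (fun i => (i : ℚ)⁻¹) n := by
    rw [Dgen, Dgen, Finset.mul_sum, ← Polynomial.coe_mapRingHom, map_sum]
    apply Finset.sum_congr rfl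
    intro i hi
    obtain ⟨hi1, hi2⟩ := Finset.mem_Icc.mp hi
    have hidvd : i ∣ n.factorial := Nat.dvd_factorial hi1 hi2
    have hcast : ((n.factorial / i : ℕ) : ℚ) = (n.factorial : ℚ) * (i : ℚ)⁻¹ := by
      rw [Nat.cast_div hidvd (by exact_mod_cast Nat.one_le_iff_ne_zero.mp hi1)]
      ring
    simp only [Polynomial.coe_mapRingHom, Polynomial.map_mul, Polynomial.map_pow,
      Polynomial.map_neg, Polynomial.map_sub, Polynomial.map_add, Polynomial.map_C,
      Polynomial.map_X, hf, MvPolynomial.map_C, MvPolynomial.map_X]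
    rw [show ((Int.castRingHom ℚ) ((n.factorial / i : ℕ) : ℤ)) = ((n.factorial / i : ℕ) : ℚ) by
      rw [eq_intCast, Int.cast_natCast], hcast, map_mul, Polynomial.C_mul]
    ring
  have hdvd2 : (Polynomial.X : Polynomial (MvPolynomial (Fin 2) ℚ)) ^ n ∣
      Polynomial.map f (Dgen ℤ (fun i => ((n.factorial / i : ℕ) : ℤ)) n) := by
    rw [hmap]
    exact hq.mul_left _
  rw [Polynomial.X_pow_dvd_iff] at hdvd2 ⊢
  intro d hd
  have h0 := hdvd2 d hd
  rw [Polynomial.coeff_map] at h0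
  exact MvPolynomial.map_injective (Int.castRingHom ℚ) Int.cast_injective
    (by rw [h0, map_zero])

/-- **(Andreatta–Gasbarri Lemma 8.2(i)) The truncated logarithm
`x ↦ ∑_{i=1}^{p−1} (−λ)^{i−1} x^i / i` is a group homomorphism
`𝒢^{(λ)} → 𝔾_a` over `O/m_r`.**  Here `0 < r ≤ 1`, `λ ∈ O_{K̄}` with
`v_p(λ) ≤ 1 − 1/p` and `v_p(λ^{p−1}) ≥ r`, `R'` is any algebra over
`R = O/m_r`, and the elements `1, …, p−1` are invertible in `R'` with
prescribed inverses `ι i`.  For `x, y` in `𝒢^{(λ)}(R')` (i.e. `1 + λx`,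
`1 + λy` units), the truncated logarithm takes the group law
`x * y = x + y + λxy` to addition. -/
theorem stmt_15 {K : Type*} [Field K] [CharZero K] (v : Valuation K ℝ≥0)
    (p : ℕ) (hp : p.Prime)
    (hp0 : v (p : K) ≠ 0) (hp1 : v (p : K) < 1)
    (hint : ∀ m : ℤ, ¬ (p : ℤ) ∣ m → v (m : K) = 1)
    (r : ℚ) (hr0 : 0 < r) (hr1 : r ≤ 1)
    (lam : v.integer)
    (hl1 : v (p : K) ^ (((1 : ℚ) - 1 / (p : ℚ) : ℚ) : ℝ) ≤ v (lam : K))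
    (hl2 : v (lam : K) ^ (p - 1) ≤ v (p : K) ^ (r : ℝ))
    {R' : Type*} [CommRing R'] [Algebra (v.integer ⧸ mId v p r) R']
    (l : R') (hl : l = algebraMap (v.integer ⧸ mId v p r) R' (Ideal.Quotient.mk (mId v p r) lam))
    (ι : ℕ → R') (hι : ∀ i : ℕ, 1 ≤ i → i ≤ p - 1 → (i : R') * ι i = 1)
    (x y : R') (hx : IsUnit (1 + l * x)) (hy : IsUnit (1 + l * y)) :
    (∑ i ∈ Finset.Icc 1 (p - 1), (-l) ^ (i - 1) * (x + y + l * x * y) ^ i * ι i) =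
      (∑ i ∈ Finset.Icc 1 (p - 1), (-l) ^ (i - 1) * x ^ i * ι i) +
        (∑ i ∈ Finset.Icc 1 (p - 1), (-l) ^ (i - 1) * y ^ i * ι i) := by
  classical
  set n := p - 1 with hn
  -- l ^ n = 0
  have hmem : lam ^ n ∈ mId v p r := by
    show v (((lam ^ n : v.integer) : K)) ≤ v (p : K) ^ (r : ℝ)
    have e : ((lam ^ n : v.integer) : K) = (lam : K) ^ n := by
      exact SubmonoidClass.coe_pow lam n
    rw [e, map_pow]
    exact hl2
  have hln : l ^ n = 0 := by
    rw [hl, ← map_pow, ← map_pow, Ideal.Quotient.eq_zero_iff_mem.mpr hmem, map_zero]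
  -- evaluate the integral divisibility
  obtain ⟨E, hE⟩ := dvd_Dz n
  set f : MvPolynomial (Fin 2) ℤ →+* R' :=
    MvPolynomial.eval₂Hom (Int.castRingHom R') ![x, y] with hf
  set ψ : Polynomial (MvPolynomial (Fin 2) ℤ) →+* R' := Polynomial.eval₂RingHom f l with hψ
  have hψX : ψ Polynomial.X = l := by simp [hψ]
  have hψD : ψ (Dgen ℤ (fun i => ((n.factorial / i : ℕ) : ℤ)) n) =
      ∑ i ∈ Finset.Icc 1 n, ((n.factorial / i : ℕ) : R') *
        ((-l) ^ (i - 1) * ((x + y + l * x * y) ^ i - x ^ i - y ^ i)) := by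
    rw [Dgen, map_sum]
    apply Finset.sum_congr rfl
    intro i _
    simp only [hψ, hf, map_mul, map_pow, map_neg, map_sub, map_add,
      Polynomial.coe_eval₂RingHom, Polynomial.eval₂_C, Polynomial.eval₂_X,
      MvPolynomial.eval₂Hom_C, MvPolynomial.eval₂Hom_X', Matrix.cons_val_zero,
      Matrix.cons_val_one, Matrix.head_cons, eq_intCast, Int.cast_natCast, map_natCast]
    ring
  have hzero : ∑ i ∈ Finset.Icc 1 n, ((n.factorial / i : ℕ) : R') *
      ((-l) ^ (i - 1) * ((x + y + l * x * y) ^ i - x ^ i - y ^ i)) = 0 := by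
    rw [← hψD, hE, map_mul, map_pow, hψX, hln, zero_mul]
  -- rewrite coefficients
  have hcoef : ∀ i ∈ Finset.Icc 1 n, ((n.factorial / i : ℕ) : R') =
      (n.factorial : R') * ι i := by
    intro i hi
    obtain ⟨hi1, hi2⟩ := Finset.mem_Icc.mp hi
    have hidvd : i ∣ n.factorial := Nat.dvd_factorial hi1 hi2
    have e1 : ((n.factorial / i : ℕ) : R') * ((i : R') * ι i) = (n.factorial : R') * ι i := by
      rw [← mul_assoc, ← Nat.cast_mul, Nat.div_mul_cancel hidvd]
    rw [← e1, hι i hi1 hi2, mul_one]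
  have hsum2 : (n.factorial : R') *
      ∑ i ∈ Finset.Icc 1 n, ((-l) ^ (i - 1) * (x + y + l * x * y) ^ i * ι i -
        (-l) ^ (i - 1) * x ^ i * ι i - (-l) ^ (i - 1) * y ^ i * ι i) = 0 := by
    rw [Finset.mul_sum, ← hzero]
    apply Finset.sum_congr rfl
    intro i hi
    rw [hcoef i hi]
    ring
  have hunitfac : ∀ m : ℕ, m ≤ n → IsUnit ((m.factorial : R')) := by
    intro m
    induction m with
    | zero => intro _; simp
    | succ k ih =>
      intro hm
      rw [Nat.factorial_succ, Nat.cast_mul]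
      exact (IsUnit.of_mul_eq_one _ (hι (k + 1) (by omega) hm)).mul
        (ih (le_trans (Nat.le_succ k) hm))
  have hS : ∑ i ∈ Finset.Icc 1 n, ((-l) ^ (i - 1) * (x + y + l * x * y) ^ i * ι i -
      (-l) ^ (i - 1) * x ^ i * ι i - (-l) ^ (i - 1) * y ^ i * ι i) = 0 := by
    obtain ⟨uu, huu⟩ := hunitfac n le_rfl
    have := hsum2
    rw [← huu] at this
    calc _ = (uu⁻¹ : R'ˣ) * ((uu : R') * _) := by rw [← mul_assoc, Units.inv_mul, one_mul]
      _ = 0 := by rw [this, mul_zero]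
  rw [Finset.sum_sub_distrib, Finset.sum_sub_distrib, sub_sub, sub_eq_zero] at hS
  rw [hS]
end
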